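/- arXiv:1504.01720 — 7 statements merged into one kernel-verified Lean document; each statement's English description precedes it below -/
import Mathlib

section
/- Let (x₁, y) and (x₂, y) be points in the upper half-plane with x₁ ≥ x₂, and let v₁, v₂ be unit vectors lying strictly in the second and third quadrants respectively. Suppose v₁ and v₂ are right-admissible with respect to (x₁, y) and (x₂, y): (1) the canonical circle C₁ through (x₁, y) tangent to v₁ with center (a₁, 0) and radius R₁ satisfies a₁ > R₁; (2) θ(v₂) ≥ θ(v₁'), where v₁' is the reflection of v₁ over the x-axis; (3) x₁ − a₁ ≥ a₁ − x₂. Then (x₁, y)/|(x₁, y)|² · v₁⊥ > (x₂, y)/|(x₂, y)|² · v₂⊥, where w⊥ denotes clockwise rotation of w by π/2. -/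
/-!
Write `b = x₁ - a₁`. Tangency and the radius condition say `(b, y) = R₁ v₁⊥`, so after scaling
by `R₁` the quantity at `(x₁, y)` is `(x₁, y)·(b, y)/|(x₁, y)|²`. On the third quadrant the map
`s ↦ (x₂, y)·(sin s, -cos s)` is decreasing, so by admissibility (2) we may replace `v₂` by the
reflection `v₁'`, which turns the quantity at `(x₂, y)` into `(x₂, y)·(-b, y)/|(x₂, y)|²`. Clearing
denominators, the comparison becomes `y²(x₁ - x₂) < b(x₁x₂ + y²)`, which follows from
`x₁ - x₂ ≤ 2b` (condition 3) and `y² = R₁² - b² < a₁² - b² ≤ x₁x₂` (conditions 1 and 3).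
-/

open Real Set

lemma antitoneOn_mul_sin_sub_mul_cos {p q : ℝ} (hp : 0 ≤ p) (hq : 0 ≤ q) :
    AntitoneOn (fun s => p * sin s - q * cos s) (Icc π (3 * π / 2)) := by
  refine antitoneOn_of_deriv_nonpos (convex_Icc _ _) (by fun_prop) (by fun_prop) fun s hs => ?_
  obtain ⟨hπs, hs3π⟩ := interior_Icc (a := π) ▸ hs
  have hcos : cos s < 0 := cos_neg_of_pi_div_two_lt_of_lt (by linarith [pi_pos]) (by linarith)
  have hsin : sin s < 0 := by
    simpa [sin_sub_pi] using sin_pos_of_pos_of_lt_pi (x := s - π) (by linarith) (by linarith)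
  have hderiv : deriv (fun s => p * sin s - q * cos s) s = p * cos s + q * sin s := by simp
  rw [hderiv]
  linarith [mul_nonpos_of_nonneg_of_nonpos hp hcos.le, mul_nonpos_of_nonneg_of_nonpos hq hsin.le]

lemma sub_eq_mul_sin_and_eq_neg_mul_cos_of_tangent {x a y s R : ℝ} (hy : 0 < y)
    (hs : cos s < 0) (hR : 0 < R) (htan : (x - a) * cos s + y * sin s = 0)
    (hrad : (x - a) ^ 2 + y ^ 2 = R ^ 2) :
    x - a = R * sin s ∧ y = -(R * cos s) := by
  have hsq : (R * cos s) ^ 2 = y ^ 2 := by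
    linear_combination
      -cos s ^ 2 * hrad + ((x - a) * cos s - y * sin s) * htan + y ^ 2 * sin_sq_add_cos_sq s
  have hy_eq : y = -(R * cos s) := by
    have : R * cos s < 0 := mul_neg_of_pos_of_neg hR hs
    nlinarith
  refine ⟨?_, hy_eq⟩
  have : y * (R * sin s - (x - a)) = 0 := by linear_combination R * htan - (x - a) * hy_eq
  linarith [(mul_eq_zero.mp this).resolve_left hy.ne']

lemma div_lt_div_of_sq_lt_mul {x₁ x₂ y b : ℝ} (hx₂ : 0 < x₂) (hb : 0 < b)
    (hy : y ^ 2 < x₁ * x₂) (hgap : x₁ - x₂ ≤ 2 * b) :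
    (y ^ 2 - b * x₂) / (x₂ ^ 2 + y ^ 2) < (b * x₁ + y ^ 2) / (x₁ ^ 2 + y ^ 2) := by
  have hx₁ : 0 < x₁ := pos_of_mul_pos_left (by nlinarith [sq_nonneg y]) hx₂.le
  rw [div_lt_div_iff₀ (by positivity) (by positivity)]
  have key : y ^ 2 * (x₁ - x₂) < b * (x₁ * x₂ + y ^ 2) := by nlinarith [sq_nonneg y]
  nlinarith

theorem stmt_3_general (x₁ x₂ y s₁ s₂ a₁ R₁ : ℝ) (hy : 0 < y)
    (hs₁ : s₁ ∈ Set.Ioo (π/2) π) (hs₂ : s₂ ∈ Set.Ioo π (3*π/2))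
    (hR₁ : 0 < R₁)
    (htan : (x₁ - a₁) * cos s₁ + y * sin s₁ = 0)
    (hrad : (x₁ - a₁)^2 + y^2 = R₁^2)
    (hadm1 : R₁ < a₁)
    (hadm2 : 2*π - s₁ ≤ s₂)
    (hadm3 : a₁ - x₂ ≤ x₁ - a₁) :
    (x₂ * sin s₂ + y * (-cos s₂)) / (x₂^2 + y^2) <
    (x₁ * sin s₁ + y * (-cos s₁)) / (x₁^2 + y^2) := by
  obtain ⟨hs₁_lo, hs₁_hi⟩ := hs₁
  have hcos₁ : cos s₁ < 0 := cos_neg_of_pi_div_two_lt_of_lt hs₁_lo (by linarith [pi_pos])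
  have hsin₁ : 0 < sin s₁ := sin_pos_of_pos_of_lt_pi (by linarith [pi_pos]) hs₁_hi
  obtain ⟨hsin_R, hcos_R⟩ := sub_eq_mul_sin_and_eq_neg_mul_cos_of_tangent hy hcos₁ hR₁ htan hrad
  have hb : 0 < x₁ - a₁ := hsin_R ▸ mul_pos hR₁ hsin₁
  have hbR : x₁ - a₁ < R₁ := by nlinarith
  have hx₂ : 0 < x₂ := by linarith
  have hy_sq : y ^ 2 < x₁ * x₂ := by nlinarith
  have hreflect : x₂ * sin s₂ - y * cos s₂ ≤ -x₂ * sin s₁ - y * cos s₁ := by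
    have := antitoneOn_mul_sin_sub_mul_cos hx₂.le hy.le
      ⟨by linarith, by linarith⟩ ⟨by linarith, hs₂.2.le⟩ hadm2
    simpa [sin_two_pi_sub, cos_two_pi_sub] using this
  have hcore := div_lt_div_of_sq_lt_mul hx₂ hb hy_sq (by linarith)
  rw [show y ^ 2 - (x₁ - a₁) * x₂ = R₁ * (-x₂ * sin s₁ - y * cos s₁) by
        linear_combination -x₂ * hsin_R + y * hcos_R,
      show (x₁ - a₁) * x₁ + y ^ 2 = R₁ * (x₁ * sin s₁ + y * (-cos s₁)) by
        linear_combination x₁ * hsin_R + y * hcos_R,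
      mul_div_assoc, mul_div_assoc] at hcore
  calc (x₂ * sin s₂ + y * (-cos s₂)) / (x₂^2 + y^2)
      ≤ (-x₂ * sin s₁ - y * cos s₁) / (x₂^2 + y^2) := by gcongr; linarith
    _ < _ := lt_of_mul_lt_mul_left hcore hR₁.le

/-- Right-case admissibility comparison (Prop. `H1_comparison_right`).
Points `(x₁, y)`, `(x₂, y)` in the upper half-plane with `x₁ ≥ x₂`; unit
vectors `v₁ = (cos s₁, sin s₁)` strictly in the second quadrant
(`s₁ ∈ (π/2, π)`) and `v₂ = (cos s₂, sin s₂)` strictly in the third quadrant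
(`s₂ ∈ (π, 3π/2)`).  The canonical circle at `(x₁, y)` tangent to `v₁` has
center `(a₁, 0)` and radius `R₁ > 0`:  `(x₁ - a₁) cos s₁ + y sin s₁ = 0` and
`(x₁ - a₁)² + y² = R₁²`.  Admissibility: `a₁ > R₁`; `θ(v₂) ≥ θ(v₁')`, i.e.
`s₂ ≥ 2π - s₁`; and `x₁ - a₁ ≥ a₁ - x₂`.  Then, with `v⊥ = (sin s, -cos s)`
the clockwise rotation of `v` by `π/2`,
`(x₁, y)/|(x₁, y)|² · v₁⊥ > (x₂, y)/|(x₂, y)|² · v₂⊥`. -/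
theorem stmt_3 (x₁ x₂ y s₁ s₂ a₁ R₁ : ℝ) (hy : 0 < y) (hx : x₂ ≤ x₁)
    (hs₁ : s₁ ∈ Set.Ioo (π/2) π) (hs₂ : s₂ ∈ Set.Ioo π (3*π/2))
    (hR₁ : 0 < R₁)
    (htan : (x₁ - a₁) * cos s₁ + y * sin s₁ = 0)
    (hrad : (x₁ - a₁)^2 + y^2 = R₁^2)
    (hadm1 : R₁ < a₁)
    (hadm2 : 2*π - s₁ ≤ s₂)
    (hadm3 : a₁ - x₂ ≤ x₁ - a₁) :
    (x₂ * sin s₂ + y * (-cos s₂)) / (x₂^2 + y^2) <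
    (x₁ * sin s₁ + y * (-cos s₁)) / (x₁^2 + y^2) :=
  stmt_3_general x₁ x₂ y s₁ s₂ a₁ R₁ hy hs₁ hs₂ hR₁ htan hrad hadm1 hadm2 hadm3
end

section
/- Let A be the circle with center (a, b), b ≥ 0, and radius r > 0, parameterized by α(t) = (a + r cos(t/r), b + r sin(t/r)), and define G̃(t) = F̃(t) − R̃(t) where F̃(t) = a − b cot(t/r) and R̃(t) = (b + r sin(t/r))/sin(t/r). Then for t with sin(t/r) > 0, G̃'(t) = (b/r) csc²(t/r)(1 + cos(t/r)) ≥ 0. If instead b ≤ 0 (so −b/r ≥ 0 after reversing orientation appropriately), then G̃'(t) ≤ 0 when b ≤ 0. -/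
open Real

/- After the substitution `x = t/r`, `G̃ = a - r - b (1 + cos x)/sin x`, and
`d/dx [(1 + cos x)/sin x] = -(1 + cos x)/sin² x` by `sin² + cos² = 1`; the sign of `G̃'` is
therefore that of `b`, as `1 + cos x ≥ 0`. -/

theorem hasDerivAt_sub_cot_sub_div_sin (a b r : ℝ) {x : ℝ} (hx : sin x ≠ 0) :
    HasDerivAt (fun x => (a - b * (cos x / sin x)) - (b + r * sin x) / sin x)
      (b * (1 + cos x) / sin x ^ 2) x := by
  have hcot := (hasDerivAt_cos x).div (hasDerivAt_sin x) hx
  have hR := ((hasDerivAt_sin x).const_mul r).const_add b |>.div (hasDerivAt_sin x) hx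
  refine ((hcot.const_mul b).const_sub a).sub hR |>.congr_deriv ?_
  field_simp
  linear_combination b * sin_sq_add_cos_sq x

theorem one_div_sin_sq_mul_one_add_cos_nonneg (x : ℝ) : 0 ≤ 1 / sin x ^ 2 * (1 + cos x) := by
  exact mul_nonneg (by positivity) (by linarith [neg_one_le_cos x])

/-- With `F̃(t) = a - b cot(t/r)`, `R̃(t) = (b + r sin(t/r))/sin(t/r)` and
`G̃ = F̃ - R̃` along the circle `α(t) = (a + r cos(t/r), b + r sin(t/r))`,
for `sin(t/r) > 0` one has `G̃'(t) = (b/r) csc²(t/r)(1 + cos(t/r))`, which is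
`≥ 0` when `b ≥ 0` and `≤ 0` when `b ≤ 0`. -/
theorem stmt_6 (a b r t : ℝ) (hr : 0 < r) (hs : 0 < sin (t/r)) :
    HasDerivAt
      (fun u => (a - b * (cos (u/r) / sin (u/r))) - (b + r * sin (u/r)) / sin (u/r))
      ((b/r) * (1 / sin (t/r)^2) * (1 + cos (t/r))) t ∧
    (0 ≤ b → 0 ≤ (b/r) * (1 / sin (t/r)^2) * (1 + cos (t/r))) ∧
    (b ≤ 0 → (b/r) * (1 / sin (t/r)^2) * (1 + cos (t/r)) ≤ 0) := by
  have hdiv : HasDerivAt (fun u : ℝ => u / r) (1 / r) t := (hasDerivAt_id t).div_const r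
  have hG := (hasDerivAt_sub_cot_sub_div_sin a b r hs.ne').comp t hdiv
  have hc := one_div_sin_sq_mul_one_add_cos_nonneg (t / r)
  simp only [mul_assoc]
  refine ⟨hG.congr_deriv (by ring), fun hb => ?_, fun hb => ?_⟩
  · exact mul_nonneg (div_nonneg hb hr.le) hc
  · exact mul_nonpos_of_nonpos_of_nonneg (div_nonpos_of_nonpos_of_nonneg hb hr.le) hc
end

section
/- Let a > r > 0 and p > 0, let α(t) = (a + r cos(t/r), r sin(t/r)) parameterize the circle of radius r centered at (a, 0), and let H̃₁(t) = p · (α(t)/|α(t)|²) · (cos(t/r), sin(t/r)). Then for any t with sin(t/r) > 0, H̃₁'(t) < 0. -/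
open Real

/-! Writing `θ = t/r`, one has `α·(cos θ, sin θ) = a cos θ + r` and `|α|² = a² + r² + 2ar cos θ`,
so `H̃₁(t) = p (a cos θ + r)/(a² + r² + 2ar cos θ)`. Differentiating in `θ`, the `cos θ` terms
cancel and the derivative is `p a (r² - a²) sin θ / (r |α|⁴)`, negative when `a > r > 0`. -/

lemma circle_inner_direction (a r x : ℝ) :
    (a + r * cos x) * cos x + (r * sin x) * sin x = a * cos x + r := by
  linear_combination r * sin_sq_add_cos_sq x

lemma circle_normSq (a r x : ℝ) :
    (a + r * cos x) ^ 2 + (r * sin x) ^ 2 = a ^ 2 + r ^ 2 + 2 * a * r * cos x := by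
  linear_combination r ^ 2 * sin_sq_add_cos_sq x

lemma circle_normSq_pos {a r : ℝ} (h : |r| ≠ |a|) (x : ℝ) :
    0 < a ^ 2 + r ^ 2 + 2 * a * r * cos x := by
  have hcos : -|a * r| ≤ a * r * cos x := by
    have : |a * r * cos x| ≤ |a * r| := by
      rw [abs_mul (a * r)]
      exact mul_le_of_le_one_right (abs_nonneg _) (abs_cos_le_one x)
    exact (abs_le.mp this).1
  have hsq : 0 < (|a| - |r|) ^ 2 := by
    have : |a| - |r| ≠ 0 := sub_ne_zero.mpr (Ne.symm h)
    positivity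
  nlinarith [sq_abs a, sq_abs r, abs_mul a r]

lemma hasDerivAt_circle_inner_div_normSq (a r x : ℝ) (hD : a ^ 2 + r ^ 2 + 2 * a * r * cos x ≠ 0) :
    HasDerivAt (fun θ => (a * cos θ + r) / (a ^ 2 + r ^ 2 + 2 * a * r * cos θ))
      (a * (r ^ 2 - a ^ 2) * sin x / (a ^ 2 + r ^ 2 + 2 * a * r * cos x) ^ 2) x := by
  have hNum : HasDerivAt (fun θ => a * cos θ + r) (a * -sin x) x :=
    ((hasDerivAt_cos x).const_mul a).add_const r
  have hDen : HasDerivAt (fun θ => a ^ 2 + r ^ 2 + 2 * a * r * cos θ) (2 * a * r * -sin x) x :=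
    ((hasDerivAt_cos x).const_mul (2 * a * r)).const_add _
  refine (hNum.div hDen hD).congr_deriv ?_
  ring

/-- For `a > r > 0` and `p > 0`, along the circle
`α(t) = (a + r cos(t/r), r sin(t/r))` the normal derivative of `log(r^p)`,
`H̃₁(t) = p (α(t)/|α(t)|²) · (cos(t/r), sin(t/r))`, has negative derivative
at every `t` with `sin(t/r) > 0`. -/
theorem stmt_8 (a r p t : ℝ) (hr : 0 < r) (har : r < a) (hp : 0 < p)
    (hs : 0 < sin (t/r)) :
    deriv (fun u => p * ((a + r * cos (u/r)) * cos (u/r) + (r * sin (u/r)) * sin (u/r)) /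
      ((a + r * cos (u/r))^2 + (r * sin (u/r))^2)) t < 0 := by
  have hD : 0 < a ^ 2 + r ^ 2 + 2 * a * r * cos (t / r) :=
    circle_normSq_pos (by rw [abs_of_pos hr, abs_of_pos (hr.trans har)]; exact har.ne) _
  have hθ : HasDerivAt (· / r) (1 / r) t := by simpa using (hasDerivAt_id t).div_const r
  have hH := ((hasDerivAt_circle_inner_div_normSq a r (t / r) hD.ne').comp t hθ).const_mul p
  simp only [Function.comp_def] at hH
  simp only [circle_inner_direction, circle_normSq, mul_div_assoc]
  rw [hH.deriv]
  have hnum : a * (r ^ 2 - a ^ 2) * sin (t / r) < 0 :=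
    mul_neg_of_neg_of_pos (mul_neg_of_pos_of_neg (hr.trans har) (by nlinarith)) hs
  exact mul_neg_of_pos_of_neg hp
    (mul_neg_of_neg_of_pos (div_neg_of_neg_of_pos hnum (by positivity)) (by positivity))
end

section
/- Let (x₂, y) be a point with y > 0 and x₂ < 0, and let v₂ be a unit vector strictly in the third quadrant. Let x* be the real number such that v₂ is tangent at (x*, y) to the circle centered at the origin through (x*, y) (i.e., (x*, y) · v₂ = 0), and suppose x* ≤ x₂. Then (x₂, y)/|(x₂, y)|² · v₂⊥ ≥ (x*, y)/|(x*, y)|² · v₂⊥ = 1/|(x*, y)|, where v₂⊥ is the clockwise rotation of v₂ by π/2. -/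
open Real

/-- Let `(x₂, y)` with `y > 0` and `x₂ < 0`, and let `v₂ = (cos s₂, sin s₂)`
be a unit vector strictly in the third quadrant (`s₂ ∈ (π, 3π/2)`).  Let `x*`
satisfy `(x*, y) · v₂ = 0` (so `v₂` is tangent at `(x*, y)` to the circle
centered at the origin through `(x*, y)`), and suppose `x* ≤ x₂`.  Then, with
`v₂⊥ = (sin s₂, -cos s₂)` the clockwise rotation of `v₂` by `π/2`,
`(x₂, y)/|(x₂, y)|² · v₂⊥ ≥ (x*, y)/|(x*, y)|² · v₂⊥ = 1/|(x*, y)|`. -/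
theorem stmt_11 (x₂ y xstar s₂ : ℝ) (hy : 0 < y) (hx₂ : x₂ < 0)
    (hs₂ : s₂ ∈ Set.Ioo π (3*π/2))
    (htan : xstar * cos s₂ + y * sin s₂ = 0)
    (hle : xstar ≤ x₂) :
    (xstar * sin s₂ + y * (-cos s₂)) / (xstar^2 + y^2) ≤
      (x₂ * sin s₂ + y * (-cos s₂)) / (x₂^2 + y^2) ∧
    (xstar * sin s₂ + y * (-cos s₂)) / (xstar^2 + y^2)
      = 1 / Real.sqrt (xstar^2 + y^2) := by
  obtain ⟨h1, h2⟩ := hs₂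
  have hpi := Real.pi_pos
  have hc : cos s₂ < 0 := by
    apply Real.cos_neg_of_pi_div_two_lt_of_lt
    · linarith
    · linarith
  have hsin : sin s₂ < 0 := by
    have hp : 0 < Real.sin (s₂ - π) :=
      Real.sin_pos_of_pos_of_lt_pi (by linarith) (by linarith)
    rw [Real.sin_sub_pi] at hp
    linarith
  have hxstar : xstar < 0 := by
    nlinarith [mul_pos hy (neg_pos.2 hsin)]
  have hP : 0 < xstar * sin s₂ + y * (-cos s₂) := by
    nlinarith [mul_pos (neg_pos.2 hxstar) (neg_pos.2 hsin),
      mul_pos hy (neg_pos.2 hc)]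
  have hsq : (xstar * sin s₂ + y * (-cos s₂))^2 = xstar^2 + y^2 := by
    have hpyth : sin s₂ ^ 2 + cos s₂ ^ 2 = 1 := Real.sin_sq_add_cos_sq s₂
    nlinarith [sq_nonneg (xstar * cos s₂ + y * sin s₂)]
  have hden : 0 < xstar^2 + y^2 := by positivity
  have hden2 : 0 < x₂^2 + y^2 := by positivity
  constructor
  · rw [div_le_div_iff₀ hden hden2]
    have key : (x₂ * sin s₂ + y * (-cos s₂)) * (xstar^2 + y^2) -
        (xstar * sin s₂ + y * (-cos s₂)) * (x₂^2 + y^2) =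
        (x₂ - xstar) * (y * (xstar * cos s₂ + y * sin s₂)
          - x₂ * (xstar * sin s₂ + y * (-cos s₂))) := by ring
    rw [htan] at key
    nlinarith [mul_nonneg (sub_nonneg.2 hle) (mul_nonneg (le_of_lt (neg_pos.2 hx₂)) hP.le)]
  · have hsqrt : Real.sqrt (xstar^2 + y^2) = xstar * sin s₂ + y * (-cos s₂) := by
      rw [← hsq, Real.sqrt_sq hP.le]
    rw [hsqrt, ← hsq, sq, ← div_div, div_self hP.ne']
end

section
/- Let (x₁, y) and (x₂, y) be points with y > 0, and let v₁, v₂ be unit vectors strictly in the second and third quadrants respectively. Suppose v₁ and v₂ are left-admissible: (1) the canonical circle through (x₁, y) tangent to v₁ has center (a₁, 0) and radius R₁ with 0 < a₁ < R₁; (2) θ(v₂) ≤ θ(v₁'), where v₁' is the reflection of v₁ over the x-axis; (3) the canonical circle through (x₂, y) tangent to v₂ has radius R₂ ≤ R₁; (4) x₂ ∈ [x*, x₁'], where x₁' = 2a₁ − x₁ and (x*, y) · v₂ = 0. Then (x₂, y)/|(x₂, y)|² · v₂⊥ > (x₁, y)/|(x₁, y)|² · v₁⊥, where w⊥ denotes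 clockwise rotation by π/2. -/
open Real

set_option maxHeartbeats 1000000 in
lemma key_poly (y q₁ q₂ R₁ R₂ a₁ x₁ x₂ : ℝ) (hy : 0 < y)
    (hq₁ : 0 < q₁) (hq₂ : 0 < q₂)
    (hR1 : q₁^2 + y^2 = R₁^2) (hR2 : q₂^2 + y^2 = R₂^2)
    (hR₁ : 0 < R₁) (hR₂ : 0 < R₂)
    (ha : 0 < a₁) (ha' : a₁ < R₁) (hx₁ : x₁ = a₁ + q₁)
    (hRR : R₂ ≤ R₁) (hx₂l : -q₂ ≤ x₂) (hx₂r : x₂ ≤ x₁ - 2*q₁) :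
    (x₁*q₁ + y^2) * (R₂ * (x₂^2 + y^2)) < (y^2 - q₂*x₂) * (R₁ * (x₁^2 + y^2)) := by
  have hq₁R : q₁ < R₁ := by nlinarith
  have hq₂R : q₂ < R₂ := by nlinarith
  have hq21 : q₂ ≤ q₁ := by nlinarith
  have hyR : y < R₁ := by nlinarith
  have hx₁pos : 0 < x₁ := by nlinarith
  have hD₂ : 0 < x₂^2 + y^2 := by positivity
  have hD₁ : 0 < x₁^2 + y^2 := by positivity
  rcases le_or_gt x₂ 0 with hx2 | hx2
  · have h1 : x₂^2 + y^2 ≤ y^2 - q₂*x₂ := by nlinarith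
    have h2 : x₁*q₁ + y^2 < x₁^2 + y^2 := by nlinarith
    calc (x₁*q₁ + y^2) * (R₂ * (x₂^2 + y^2))
        < (x₁^2 + y^2) * (R₂ * (x₂^2 + y^2)) := by
          apply mul_lt_mul_of_pos_right h2; positivity
      _ ≤ (y^2 - q₂*x₂) * (R₁ * (x₁^2 + y^2)) := by
          nlinarith [mul_nonneg (mul_nonneg (sub_nonneg.2 hRR) hD₂.le) hD₁.le,
            mul_nonneg (mul_nonneg hR₁.le hD₁.le) (sub_nonneg.2 h1)]
  · have hbpos : 0 < x₁ - 2*q₁ := lt_of_lt_of_le hx2 hx₂r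
    have hby : x₁ - 2*q₁ < y := by
      nlinarith [mul_pos hy (sub_pos.2 hyR), mul_pos hq₁ hy, mul_pos hq₁ (sub_pos.2 hyR)]
    have hbD : 0 < (x₁ - 2*q₁)^2 + y^2 := by positivity
    have f1 : 0 ≤ (y^2 - q₂*x₂) * ((x₁ - 2*q₁)^2 + y^2)
        - (y^2 - q₂*(x₁ - 2*q₁)) * (x₂^2 + y^2) := by
      have fid : (y^2 - q₂*x₂) * ((x₁ - 2*q₁)^2 + y^2)
          - (y^2 - q₂*(x₁ - 2*q₁)) * (x₂^2 + y^2)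
          = ((x₁ - 2*q₁) - x₂) * (y^2*((x₁ - 2*q₁) + x₂)
            + q₂*(y^2 - x₂*(x₁ - 2*q₁))) := by ring
      rw [fid]
      apply mul_nonneg (by linarith)
      have hx2b : x₂*(x₁ - 2*q₁) ≤ y^2 := by nlinarith
      have : 0 < y^2*((x₁ - 2*q₁) + x₂) := by positivity
      nlinarith [mul_nonneg hq₂.le (sub_nonneg.2 hx2b)]
    have f2 : 0 < y^2 - q₁*(x₁ - 2*q₁) := by nlinarith
    have f2' : 0 ≤ (y^2 - q₂*(x₁ - 2*q₁)) * (x₂^2 + y^2)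
        - (y^2 - q₁*(x₁ - 2*q₁)) * (x₂^2 + y^2) := by
      nlinarith [mul_nonneg (mul_nonneg (sub_nonneg.2 hq21) hbpos.le) hD₂.le]
    have f3 : (y^2 - q₁*(x₁ - 2*q₁)) * (x₁^2 + y^2) - (x₁*q₁ + y^2) * ((x₁ - 2*q₁)^2 + y^2)
        = 2*q₁*a₁*(R₁^2 - a₁^2) := by rw [← hR1]; subst hx₁; ring
    have f3pos : 0 < (y^2 - q₁*(x₁ - 2*q₁)) * (x₁^2 + y^2)
        - (x₁*q₁ + y^2) * ((x₁ - 2*q₁)^2 + y^2) := by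
      rw [f3]; apply mul_pos (by positivity) (by nlinarith)
    have hnum : 0 < x₁*q₁ + y^2 := by positivity
    have main : (x₁*q₁ + y^2) * (R₂ * (x₂^2 + y^2)) * ((x₁ - 2*q₁)^2 + y^2)
        < (y^2 - q₂*x₂) * (R₁ * (x₁^2 + y^2)) * ((x₁ - 2*q₁)^2 + y^2) := by
      nlinarith [mul_nonneg (mul_pos hR₁ hD₁).le f1,
        mul_nonneg (mul_pos hR₁ hD₁).le f2',
        mul_pos (mul_pos hR₁ hD₂) f3pos,
        mul_nonneg (mul_nonneg (sub_nonneg.2 hRR) hD₂.le) (mul_pos hnum hbD).le]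
    exact lt_of_mul_lt_mul_right main hbD.le


/-- Left-case admissibility comparison (Prop. `admissibility theorem, left
case`).  Points `(x₁, y)`, `(x₂, y)` with `y > 0`; unit vectors
`v₁ = (cos s₁, sin s₁)` strictly in the second quadrant (`s₁ ∈ (π/2, π)`) and
`v₂ = (cos s₂, sin s₂)` strictly in the third quadrant (`s₂ ∈ (π, 3π/2)`).
The canonical circle at `(x₁, y)` tangent to `v₁` has center `(a₁, 0)` and
radius `R₁`, and the one at `(x₂, y)` tangent to `v₂` has center `(a₂, 0)`
and radius `R₂`.  Left-admissibility: `0 < a₁ < R₁`; `θ(v₂) ≤ θ(v₁')`, i.e.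
`s₂ ≤ 2π - s₁`; `R₂ ≤ R₁`; and `x₂ ∈ [x*, x₁']` where `x₁' = 2a₁ - x₁` and
`(x*, y) · v₂ = 0`.  Then, with `v⊥ = (sin s, -cos s)` the clockwise rotation
by `π/2`, `(x₂, y)/|(x₂, y)|² · v₂⊥ > (x₁, y)/|(x₁, y)|² · v₁⊥`. -/
theorem stmt_12 (x₁ x₂ y s₁ s₂ a₁ R₁ a₂ R₂ xstar : ℝ) (hy : 0 < y)
    (hs₁ : s₁ ∈ Set.Ioo (π/2) π) (hs₂ : s₂ ∈ Set.Ioo π (3*π/2))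
    (hR₁ : 0 < R₁) (hR₂ : 0 < R₂)
    (htan₁ : (x₁ - a₁) * cos s₁ + y * sin s₁ = 0)
    (hrad₁ : (x₁ - a₁)^2 + y^2 = R₁^2)
    (htan₂ : (x₂ - a₂) * cos s₂ + y * sin s₂ = 0)
    (hrad₂ : (x₂ - a₂)^2 + y^2 = R₂^2)
    (hadm1 : 0 < a₁) (hadm1' : a₁ < R₁)
    (hadm2 : s₂ ≤ 2*π - s₁)
    (hadm3 : R₂ ≤ R₁)
    (hxstar : xstar * cos s₂ + y * sin s₂ = 0)
    (hadm4 : x₂ ∈ Set.Icc xstar (2*a₁ - x₁)) :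
    (x₁ * sin s₁ + y * (-cos s₁)) / (x₁^2 + y^2) <
    (x₂ * sin s₂ + y * (-cos s₂)) / (x₂^2 + y^2) := by
  obtain ⟨hs₁l, hs₁r⟩ := hs₁
  obtain ⟨hs₂l, hs₂r⟩ := hs₂
  have hpi := Real.pi_pos
  have hc₁ : cos s₁ < 0 := Real.cos_neg_of_pi_div_two_lt_of_lt hs₁l (by linarith)
  have hn₁ : 0 < sin s₁ := Real.sin_pos_of_pos_of_lt_pi (by linarith) hs₁r
  have hc₂ : cos s₂ < 0 := Real.cos_neg_of_pi_div_two_lt_of_lt (by linarith) (by linarith)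
  have hn₂ : sin s₂ < 0 := by
    have h := Real.sin_pos_of_pos_of_lt_pi (x := s₂ - π) (by linarith) (by linarith)
    rw [Real.sin_sub_pi] at h; linarith
  -- circle 1 relations
  have h1sq : (x₁ - a₁)^2 * (cos s₁)^2 = y^2 * (sin s₁)^2 := by
    linear_combination ((x₁ - a₁) * cos s₁ - y * sin s₁) * htan₁
  have hcos1sq : (R₁ * cos s₁)^2 = y^2 := by
    linear_combination h1sq + y^2 * (sin_sq_add_cos_sq s₁) - (cos s₁)^2 * hrad₁
  have hc1v : R₁ * cos s₁ = -y := by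
    have hfac : (R₁ * cos s₁ + y) * (R₁ * cos s₁ - y) = 0 := by linear_combination hcos1sq
    have hneg : R₁ * cos s₁ < 0 := mul_neg_of_pos_of_neg hR₁ hc₁
    rcases mul_eq_zero.1 hfac with h | h
    · linarith
    · linarith
  have hs1v : R₁ * sin s₁ = x₁ - a₁ := by
    have h : cos s₁ * ((x₁ - a₁) - R₁ * sin s₁) = 0 := by
      linear_combination htan₁ - sin s₁ * hc1v
    rcases mul_eq_zero.1 h with h | h
    · exact absurd h (ne_of_lt hc₁)
    · linarith
  -- circle 2 relations
  have h2sq : (x₂ - a₂)^2 * (cos s₂)^2 = y^2 * (sin s₂)^2 := by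
    linear_combination ((x₂ - a₂) * cos s₂ - y * sin s₂) * htan₂
  have hcos2sq : (R₂ * cos s₂)^2 = y^2 := by
    linear_combination h2sq + y^2 * (sin_sq_add_cos_sq s₂) - (cos s₂)^2 * hrad₂
  have hc2v : R₂ * cos s₂ = -y := by
    have hfac : (R₂ * cos s₂ + y) * (R₂ * cos s₂ - y) = 0 := by linear_combination hcos2sq
    have hneg : R₂ * cos s₂ < 0 := mul_neg_of_pos_of_neg hR₂ hc₂
    rcases mul_eq_zero.1 hfac with h | h
    · linarith
    · linarith
  have hs2v : R₂ * sin s₂ = x₂ - a₂ := by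
    have h : cos s₂ * ((x₂ - a₂) - R₂ * sin s₂) = 0 := by
      linear_combination htan₂ - sin s₂ * hc2v
    rcases mul_eq_zero.1 h with h | h
    · exact absurd h (ne_of_lt hc₂)
    · linarith
  have hxs : xstar = x₂ - a₂ := by
    have h : cos s₂ * (xstar - (x₂ - a₂)) = 0 := by linear_combination hxstar - htan₂
    rcases mul_eq_zero.1 h with h | h
    · exact absurd h (ne_of_lt hc₂)
    · linarith
  -- positivity facts
  have hq₁pos : 0 < x₁ - a₁ := by
    rw [← hs1v]; exact mul_pos hR₁ hn₁
  have hq₂pos : 0 < -xstar := by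
    rw [hxs, ← hs2v]; nlinarith
  have hD₁ : (0:ℝ) < x₁^2 + y^2 := by positivity
  have hD₂ : (0:ℝ) < x₂^2 + y^2 := by positivity
  obtain ⟨hx₂l, hx₂r⟩ := hadm4
  have key := key_poly y (x₁ - a₁) (-xstar) R₁ R₂ a₁ x₁ x₂ hy hq₁pos hq₂pos
    hrad₁ (by rw [← hxs] at hrad₂; linear_combination hrad₂) hR₁ hR₂ hadm1 hadm1'
    (by ring) hadm3 (by linarith) (by linarith)
  rw [div_lt_div_iff₀ hD₁ hD₂]
  have goal' : (x₁ * sin s₁ + y * (-cos s₁)) * (x₂^2 + y^2) * (R₁ * R₂)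
      < (x₂ * sin s₂ + y * (-cos s₂)) * (x₁^2 + y^2) * (R₁ * R₂) := by
    have lhs_eq : (x₁ * sin s₁ + y * (-cos s₁)) * (x₂^2 + y^2) * (R₁ * R₂)
        = (x₁*(x₁ - a₁) + y^2) * (R₂ * (x₂^2 + y^2)) := by
      linear_combination R₂ * (x₂^2 + y^2) * x₁ * hs1v - R₂ * (x₂^2 + y^2) * y * hc1v
    have rhs_eq : (x₂ * sin s₂ + y * (-cos s₂)) * (x₁^2 + y^2) * (R₁ * R₂)
        = (y^2 - (-xstar)*x₂) * (R₁ * (x₁^2 + y^2)) := by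
      rw [hxs]
      linear_combination R₁ * (x₁^2 + y^2) * x₂ * hs2v - R₁ * (x₁^2 + y^2) * y * hc2v
    rw [lhs_eq, rhs_eq]
    exact key
  exact lt_of_mul_lt_mul_right goal' (by positivity)
end

section
/- Let γ be a smooth arclength-parameterized plane curve with γ(0) = (1, 0), γ'(0) = (0, 1), and curvature κ(0) > 0. For s near 0 with γ₁'(s) ≠ 0, define F(s) = (γ(s) · γ'(s))/γ₁'(s). Then lim_{s → 0} F(s) = 1 − 1/κ(0). -/
/-!
Both the numerator `γ · γ'` and the denominator `γ₁'` of `F` vanish at `0`; their derivatives there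
are `|γ'(0)|² + γ(0) · γ''(0) = 1 - κ(0)` and `γ₁''(0) = -κ(0)`. Hence `F` is a quotient of
difference quotients at `0`, and its limit is `(1 - κ(0)) / (-κ(0)) = 1 - 1/κ(0)`.
-/

open Real Filter Topology

theorem HasDerivAt.fst {𝕜 E F : Type*} [NontriviallyNormedField 𝕜] [NormedAddCommGroup E]
    [NormedSpace 𝕜 E] [NormedAddCommGroup F] [NormedSpace 𝕜 F] {f : 𝕜 → E × F} {f' : E × F}
    {x : 𝕜} (h : HasDerivAt f f' x) : HasDerivAt (fun t => (f t).1) f'.1 x :=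
  (hasFDerivAt_fst (p := f x)).comp_hasDerivAt x h

theorem HasDerivAt.snd {𝕜 E F : Type*} [NontriviallyNormedField 𝕜] [NormedAddCommGroup E]
    [NormedSpace 𝕜 E] [NormedAddCommGroup F] [NormedSpace 𝕜 F] {f : 𝕜 → E × F} {f' : E × F}
    {x : 𝕜} (h : HasDerivAt f f' x) : HasDerivAt (fun t => (f t).2) f'.2 x :=
  (hasFDerivAt_snd (p := f x)).comp_hasDerivAt x h

theorem tendsto_div_nhdsNE_of_hasDerivAt_of_eq_zero {𝕜 : Type*} [NontriviallyNormedField 𝕜]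
    {f g : 𝕜 → 𝕜} {f' g' a : 𝕜} (hf : HasDerivAt f f' a) (hg : HasDerivAt g g' a)
    (hfa : f a = 0) (hga : g a = 0) (hg' : g' ≠ 0) :
    Tendsto (fun x => f x / g x) (𝓝[≠] a) (𝓝 (f' / g')) := by
  have hslopes : Tendsto (fun x => slope f a x / slope g a x) (𝓝[≠] a) (𝓝 (f' / g')) :=
    (hasDerivAt_iff_tendsto_slope.mp hf).div (hasDerivAt_iff_tendsto_slope.mp hg) hg'
  refine hslopes.congr' ?_
  filter_upwards [self_mem_nhdsWithin] with x hx
  have hxa : x - a ≠ 0 := sub_ne_zero.mpr hx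
  simp only [slope_def_field, hfa, hga, sub_zero]
  field_simp

theorem stmt_14_general (γ : ℝ → ℝ × ℝ) (κ₀ : ℝ) (hκ₀ : 0 < κ₀)
    (hsmooth : ContDiff ℝ 2 γ)
    (h0 : γ 0 = (1, 0))
    (h1 : deriv γ 0 = (0, 1))
    (h2 : deriv (deriv γ) 0 = (-κ₀, 0)) :
    Tendsto (fun s => ((γ s).1 * (deriv γ s).1 + (γ s).2 * (deriv γ s).2) /
        (deriv γ s).1)
      (nhdsWithin 0 {(0:ℝ)}ᶜ) (nhds (1 - 1/κ₀)) := by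
  have hγ : HasDerivAt γ (0, 1) 0 := h1 ▸ (hsmooth.differentiable (by norm_num) 0).hasDerivAt
  have hγ' : HasDerivAt (deriv γ) (-κ₀, 0) 0 :=
    h2 ▸ (hsmooth.differentiable_deriv_two 0).hasDerivAt
  have hnum : HasDerivAt (fun s => (γ s).1 * (deriv γ s).1 + (γ s).2 * (deriv γ s).2)
      (1 - κ₀) 0 := by
    refine ((hγ.fst.mul hγ'.fst).add (hγ.snd.mul hγ'.snd)).congr_deriv ?_
    simp only [h0, h1]
    ring
  have hlim := tendsto_div_nhdsNE_of_hasDerivAt_of_eq_zero hnum hγ'.fst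
    (by simp [h0, h1]) (by simp [h1]) (neg_ne_zero.mpr hκ₀.ne')
  convert hlim using 2
  field_simp
  ring

/-- Lemma `kappa(0) equals lambda(0)`: for a smooth arclength-parameterized
plane curve `γ` with `γ(0) = (1, 0)`, `γ'(0) = (0, 1)`, `γ''(0) = (-κ₀, 0)`
with curvature `κ₀ > 0`, the abscissa `F(s) = (γ(s) · γ'(s))/γ₁'(s)` of the
center of the canonical circle tends to `1 - 1/κ₀` as `s → 0`. -/
theorem stmt_14 (γ : ℝ → ℝ × ℝ) (κ₀ : ℝ) (hκ₀ : 0 < κ₀)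
    (hsmooth : ContDiff ℝ 2 γ)
    (harc : ∀ s, (deriv γ s).1^2 + (deriv γ s).2^2 = 1)
    (h0 : γ 0 = (1, 0))
    (h1 : deriv γ 0 = (0, 1))
    (h2 : deriv (deriv γ) 0 = (-κ₀, 0)) :
    Tendsto (fun s => ((γ s).1 * (deriv γ s).1 + (γ s).2 * (deriv γ s).2) /
        (deriv γ s).1)
      (nhdsWithin 0 {(0:ℝ)}ᶜ) (nhds (1 - 1/κ₀)) :=
  stmt_14_general γ κ₀ hκ₀ hsmooth h0 h1 h2
end

section
/- Let f, g: (a, b) → ℝ≥0 be C² functions such that: (1) the limits as x → b⁻ of the unit tangent vectors t_f(x) = (1, f'(x))/|(1, f'(x))| and t_g(x) exist; (2) lim_{x→b⁻} f(x) and lim_{x→b⁻} g(x) exist; (3) f' ≥ 0 and g' ≥ 0 on (a, b); (4) lim_{x→b⁻} f(x) ≤ lim_{x→b⁻} g(x) and lim_{x→b⁻} θ(t_f(x)) ≥ lim_{x→b⁻} θ(t_g(x)); (5) the upward curvature satisfies κ_f(x) ≤ κ_g(x) for all x ∈ (a, b). Then for every x ∈ (a, b), f(x) ≤ g(x) and θ(t_f(x))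 ≥ θ(t_g(x)). Moreover, if κ_f(x₀) < κ_g(x₀) for some x₀ ∈ (a, b), then there is φ > 0 with θ(t_f(x)) − θ(t_g(x)) ≥ φ for all x ∈ (a, x₀). -/
/-!
With `θ_h = arctan h'` the angle of the unit tangent of the graph of `h`, one has
`(sin θ_h)' = cos θ_h · θ_h' = κ_h`. Hence `w = sin θ_g - sin θ_f` has derivative `κ_g - κ_f ≥ 0`,
so `w` increases towards its limit `sin T_g - sin T_f ≤ 0` at `b`, and `w ≤ 0` gives `θ_g ≤ θ_f`.
Since `sin ∘ arctan` is strictly increasing this means `g' ≤ f'`, so `g - f` decreases towards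
`L_g - L_f ≥ 0`. If `κ_f(x₀) < κ_g(x₀)`, then `w'(x₀) > 0` forces `w(x₀) < 0`, and for `x < x₀`,
`θ_f - θ_g ≥ sin θ_f - sin θ_g = -w(x) ≥ -w(x₀)`.
-/

open Real Filter Set Topology

noncomputable def graphCurvature (h : ℝ → ℝ) (x : ℝ) : ℝ :=
  deriv (deriv h) x / (1 + deriv h x ^ 2) ^ ((3:ℝ)/2)

noncomputable def tangentSine (h : ℝ → ℝ) (x : ℝ) : ℝ :=
  sin (arctan (deriv h x))

lemma Real.strictMono_sin_arctan : StrictMono fun t => sin (arctan t) := fun s t hst =>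
  sin_lt_sin_of_lt_of_le_pi_div_two (neg_pi_div_two_lt_arctan s).le
    (arctan_lt_pi_div_two t).le (arctan_strictMono hst)

lemma Real.mem_Icc_of_tendsto_arctan {α : Type*} {l : Filter α} [l.NeBot] {p : α → ℝ} {T : ℝ}
    (hT : Tendsto (fun x => arctan (p x)) l (𝓝 T)) : T ∈ Icc (-(π / 2)) (π / 2) :=
  isClosed_Icc.mem_of_tendsto hT <| Eventually.of_forall fun _ =>
    ⟨(neg_pi_div_two_lt_arctan _).le, (arctan_lt_pi_div_two _).le⟩

lemma HasDerivAt.sin_arctan {p : ℝ → ℝ} {p' x : ℝ} (hp : HasDerivAt p p' x) :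
    HasDerivAt (fun y => Real.sin (Real.arctan (p y))) (p' / (1 + p x ^ 2) ^ ((3:ℝ)/2)) x := by
  have hpos : (0:ℝ) < 1 + p x ^ 2 := by positivity
  convert hp.arctan.sin using 1
  rw [cos_arctan, show ((3:ℝ)/2) = 1 + 1/2 by norm_num, rpow_add hpos, rpow_one,
    ← sqrt_eq_rpow]
  field_simp

lemma hasDerivAt_tangentSine {h : ℝ → ℝ} {s : Set ℝ} {x : ℝ} (hh : ContDiffOn ℝ 2 h s)
    (hs : IsOpen s) (hx : x ∈ s) : HasDerivAt (tangentSine h) (graphCurvature h x) x := by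
  have hh' : ContDiffOn ℝ 1 (deriv h) s := hh.deriv_of_isOpen hs (by norm_num)
  exact ((hh'.differentiableOn one_ne_zero).differentiableAt (hs.mem_nhds hx)).hasDerivAt.sin_arctan

section Interval

variable {a b : ℝ} {w w' : ℝ → ℝ}

lemma monotoneOn_Ioo_of_hasDerivAt_nonneg (hw : ∀ x ∈ Ioo a b, HasDerivAt w (w' x) x)
    (hw' : ∀ x ∈ Ioo a b, 0 ≤ w' x) : MonotoneOn w (Ioo a b) :=
  monotoneOn_of_hasDerivWithinAt_nonneg (convex_Ioo a b)
    (fun x hx => (hw x hx).continuousAt.continuousWithinAt)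
    (fun x hx => (hw x (interior_subset hx)).hasDerivWithinAt)
    (fun x hx => hw' x (interior_subset hx))

lemma MonotoneOn.le_of_tendsto_nhdsLT {L : ℝ} (hw : MonotoneOn w (Ioo a b))
    (hL : Tendsto w (𝓝[<] b) (𝓝 L)) {x : ℝ} (hx : x ∈ Ioo a b) : w x ≤ L :=
  ge_of_tendsto hL <| Filter.mem_of_superset (Ioo_mem_nhdsLT hx.2) fun _ hy =>
    hw hx ⟨hx.1.trans hy.1, hy.2⟩ hy.1.le

lemma HasDerivAt.exists_Ioo_lt_of_pos {w' x : ℝ} (hw : HasDerivAt w w' x) (hw' : 0 < w')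
    (hxb : x < b) : ∃ y ∈ Ioo x b, w x < w y := by
  have hslope : Tendsto (slope w x) (𝓝[>] x) (𝓝 w') :=
    (hasDerivWithinAt_iff_tendsto_slope' (lt_irrefl x)).mp hw.hasDerivWithinAt
  obtain ⟨y, hy, hpos⟩ := (Filter.Eventually.and (Ioo_mem_nhdsGT hxb) (hslope.eventually (lt_mem_nhds hw'))).exists
  exact ⟨y, hy, (slope_pos_iff_of_le hy.1.le).mp hpos⟩

lemma le_of_deriv_le_of_tendsto_nhdsLT {f g : ℝ → ℝ} {Lf Lg : ℝ}
    (hf : DifferentiableOn ℝ f (Ioo a b)) (hg : DifferentiableOn ℝ g (Ioo a b))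
    (hfg : ∀ x ∈ Ioo a b, deriv g x ≤ deriv f x)
    (hLf : Tendsto f (𝓝[<] b) (𝓝 Lf)) (hLg : Tendsto g (𝓝[<] b) (𝓝 Lg)) (hL : Lf ≤ Lg)
    {x : ℝ} (hx : x ∈ Ioo a b) : f x ≤ g x := by
  have hd : ∀ y ∈ Ioo a b, HasDerivAt (f - g) (deriv f y - deriv g y) y := fun y hy =>
    ((hf y hy).differentiableAt (isOpen_Ioo.mem_nhds hy)).hasDerivAt.sub
      ((hg y hy).differentiableAt (isOpen_Ioo.mem_nhds hy)).hasDerivAt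
  have hmono := monotoneOn_Ioo_of_hasDerivAt_nonneg hd fun y hy => sub_nonneg.mpr (hfg y hy)
  have := hmono.le_of_tendsto_nhdsLT (hLf.sub hLg) hx
  rw [Pi.sub_apply] at this
  linarith

end Interval

theorem stmt_17_general (a b : ℝ) (f g : ℝ → ℝ)
    (hf : ContDiffOn ℝ 2 f (Ioo a b)) (hg : ContDiffOn ℝ 2 g (Ioo a b))
    (Lf Lg Tf Tg : ℝ)
    (hLf : Tendsto f (nhdsWithin b (Iio b)) (nhds Lf))
    (hLg : Tendsto g (nhdsWithin b (Iio b)) (nhds Lg))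
    (hTf : Tendsto (fun x => arctan (deriv f x)) (nhdsWithin b (Iio b)) (nhds Tf))
    (hTg : Tendsto (fun x => arctan (deriv g x)) (nhdsWithin b (Iio b)) (nhds Tg))
    (hL : Lf ≤ Lg) (hT : Tg ≤ Tf)
    (hκ : ∀ x ∈ Ioo a b,
      deriv (deriv f) x / (1 + (deriv f x)^2) ^ ((3:ℝ)/2) ≤
      deriv (deriv g) x / (1 + (deriv g x)^2) ^ ((3:ℝ)/2)) :
    (∀ x ∈ Ioo a b, f x ≤ g x ∧ arctan (deriv g x) ≤ arctan (deriv f x)) ∧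
    (∀ x₀ ∈ Ioo a b,
      deriv (deriv f) x₀ / (1 + (deriv f x₀)^2) ^ ((3:ℝ)/2) <
        deriv (deriv g) x₀ / (1 + (deriv g x₀)^2) ^ ((3:ℝ)/2) →
      ∃ φ > 0, ∀ x ∈ Ioo a x₀,
        φ ≤ arctan (deriv f x) - arctan (deriv g x)) := by
  set w := tangentSine g - tangentSine f
  have hw : ∀ x ∈ Ioo a b, HasDerivAt w (graphCurvature g x - graphCurvature f x) x :=
    fun x hx => (hasDerivAt_tangentSine hg isOpen_Ioo hx).sub
      (hasDerivAt_tangentSine hf isOpen_Ioo hx)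
  have hw_mono : MonotoneOn w (Ioo a b) :=
    monotoneOn_Ioo_of_hasDerivAt_nonneg hw fun x hx => sub_nonneg.mpr (hκ x hx)
  have hw_lim : Tendsto w (𝓝[<] b) (𝓝 (sin Tg - sin Tf)) :=
    ((continuous_sin.tendsto Tg).comp hTg).sub ((continuous_sin.tendsto Tf).comp hTf)
  have hsin : sin Tg ≤ sin Tf := sin_le_sin_of_le_of_le_pi_div_two
    (mem_Icc_of_tendsto_arctan hTg).1 (mem_Icc_of_tendsto_arctan hTf).2 hT
  have hw_nonpos : ∀ x ∈ Ioo a b, w x ≤ 0 := fun x hx =>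
    (hw_mono.le_of_tendsto_nhdsLT hw_lim hx).trans (sub_nonpos.mpr hsin)
  have hderiv : ∀ x ∈ Ioo a b, deriv g x ≤ deriv f x := fun x hx =>
    strictMono_sin_arctan.le_iff_le.mp (sub_nonpos.mp (hw_nonpos x hx))
  refine ⟨fun x hx => ⟨le_of_deriv_le_of_tendsto_nhdsLT (hf.differentiableOn (by norm_num))
    (hg.differentiableOn (by norm_num)) hderiv hLf hLg hL hx,
    arctan_strictMono.monotone (hderiv x hx)⟩, fun x₀ hx₀ hκ₀ => ?_⟩
  obtain ⟨y, hy, hwy⟩ := (hw x₀ hx₀).exists_Ioo_lt_of_pos (sub_pos.mpr hκ₀) hx₀.2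
  refine ⟨-w x₀, by linarith [hw_nonpos y ⟨hx₀.1.trans hy.1, hy.2⟩], fun x hx => ?_⟩
  have hxab : x ∈ Ioo a b := ⟨hx.1, hx.2.trans hx₀.2⟩
  have hangle := arctan_strictMono.monotone (hderiv x hxab)
  calc -w x₀ ≤ -w x := neg_le_neg (hw_mono hxab hx₀ hx.2.le)
    _ = sin (arctan (deriv f x)) - sin (arctan (deriv g x)) := by simp [w, tangentSine]
    _ ≤ arctan (deriv f x) - arctan (deriv g x) := (le_abs_self _).trans <|
      (abs_sin_sub_sin_le _ _).trans_eq (abs_of_nonneg (sub_nonneg.mpr hangle))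

/-- Chambers' curvature comparison (Prop. 3.8).  The angle of the unit
tangent `t_h(x) = (1, h'(x))/|(1, h'(x))|` is encoded monotonically by
`arctan (h'(x))`, and the upward curvature of the graph of `h` is
`κ_h(x) = h''(x)/(1 + h'(x)²)^(3/2)`.  Given `C²` functions
`f, g : (a, b) → ℝ≥0` with existing limits at `b⁻` of values and tangent
angles, nonnegative derivatives, `lim f ≤ lim g`, `lim θ(t_f) ≥ lim θ(t_g)`,
and `κ_f ≤ κ_g` on `(a, b)`, we conclude `f ≤ g` and `θ(t_f) ≥ θ(t_g)` on
`(a, b)`; and if `κ_f(x₀) < κ_g(x₀)` at some `x₀ ∈ (a, b)`, then there is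
`φ > 0` with `θ(t_f(x)) - θ(t_g(x)) ≥ φ` for all `x ∈ (a, x₀)`. -/
theorem stmt_17 (a b : ℝ) (hab : a < b) (f g : ℝ → ℝ)
    (hf : ContDiffOn ℝ 2 f (Ioo a b)) (hg : ContDiffOn ℝ 2 g (Ioo a b))
    (hf0 : ∀ x ∈ Ioo a b, 0 ≤ f x) (hg0 : ∀ x ∈ Ioo a b, 0 ≤ g x)
    (hf' : ∀ x ∈ Ioo a b, 0 ≤ deriv f x) (hg' : ∀ x ∈ Ioo a b, 0 ≤ deriv g x)
    (Lf Lg Tf Tg : ℝ)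
    (hLf : Tendsto f (nhdsWithin b (Iio b)) (nhds Lf))
    (hLg : Tendsto g (nhdsWithin b (Iio b)) (nhds Lg))
    (hTf : Tendsto (fun x => arctan (deriv f x)) (nhdsWithin b (Iio b)) (nhds Tf))
    (hTg : Tendsto (fun x => arctan (deriv g x)) (nhdsWithin b (Iio b)) (nhds Tg))
    (hL : Lf ≤ Lg) (hT : Tg ≤ Tf)
    (hκ : ∀ x ∈ Ioo a b,
      deriv (deriv f) x / (1 + (deriv f x)^2) ^ ((3:ℝ)/2) ≤
      deriv (deriv g) x / (1 + (deriv g x)^2) ^ ((3:ℝ)/2)) :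
    (∀ x ∈ Ioo a b, f x ≤ g x ∧ arctan (deriv g x) ≤ arctan (deriv f x)) ∧
    (∀ x₀ ∈ Ioo a b,
      deriv (deriv f) x₀ / (1 + (deriv f x₀)^2) ^ ((3:ℝ)/2) <
        deriv (deriv g) x₀ / (1 + (deriv g x₀)^2) ^ ((3:ℝ)/2) →
      ∃ φ > 0, ∀ x ∈ Ioo a x₀,
        φ ≤ arctan (deriv f x) - arctan (deriv g x)) :=
  stmt_17_general a b f g hf hg Lf Lg Tf Tg hLf hLg hTf hTg hL hT hκ
end
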